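/- (Complement property of Majcode.) If σ, τ ∈ S_n satisfy Majcode σ = δ(Majcode τ), then Ligne σ = {1,2,…,n−1} ∖ Ligne τ. -/

import Mathlib

/-! Removing the largest letter `n` from `σ ∈ S_n` leaves `σ' ∈ S_{n-1}`, and the last letter of
`Majcode σ` is the increase of `maj` caused by inserting `n` back. That increase is a label of the
slot where `n` goes: the last slot and the slots after descents of `σ'` get `0, 1, 2, …` from right
to left, the remaining slots continue from left to right. By induction `Ligne σ'` and `Ligne τ'` are
complementary, and the last letters of the codes add up to `n - 1`. Counting shows that then one of
the two slots, say `s`, follows an ascent of `σ'`, and the other is the first descent of `τ'`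
(or the end) to the right of `s`; inserting `n` into these two slots keeps the descent sets
complementary. -/

/-- Descent set (ligne of route) of a word, with 1-based positions. -/
def ligne (w : List ℕ) : Finset ℕ :=
  (Finset.Icc 1 (w.length - 1)).filter (fun i => w.getD (i-1) 0 > w.getD i 0)

/-- Major index of a word. -/
def maj (w : List ℕ) : ℕ := ∑ i ∈ ligne w, i

/-- Inversion number of a word. -/
def inv (w : List ℕ) : ℕ :=
  ((Finset.range w.length ×ˢ Finset.range w.length).filter
    (fun p => p.1 < p.2 ∧ w.getD p.1 0 > w.getD p.2 0)).card

/-- `w` is (the one-line word of) a permutation of `1,…,n`. -/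
def IsPermWord (n : ℕ) (w : List ℕ) : Prop := w.Perm (List.range' 1 n)

/-- One-line word of `σ ∈ S_n` with values in `1,…,n`. -/
def toWord {n : ℕ} (σ : Equiv.Perm (Fin n)) : List ℕ := List.ofFn (fun i => (σ i : ℕ) + 1)

/-- Subexcedent word: `0 ≤ d_i ≤ i-1` (1-based), i.e. `d_i ≤ i` for 0-based `i`. -/
def Subexcedent (w : List ℕ) : Prop := ∀ i < w.length, w.getD i 0 ≤ i

/-- Subdiagonal word: `0 ≤ d_i ≤ n-i` (1-based). -/
def Subdiagonal (w : List ℕ) : Prop := ∀ i < w.length, w.getD i 0 + i + 1 ≤ w.length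

/-- Lehmer code: `d_i = #{j < i : x_j > x_i}`. -/
def invcode (w : List ℕ) : List ℕ :=
  (List.range w.length).map (fun i => ((Finset.range i).filter (fun j => w.getD j 0 > w.getD i 0)).card)

/-- `Lc`-code: `d_i = #{j > i : x_i > x_j}`. -/
def lc (w : List ℕ) : List ℕ :=
  (List.range w.length).map (fun i => ((Finset.Ico (i+1) w.length).filter (fun j => w.getD i 0 > w.getD j 0)).card)

/-- Major index code: `d_i = maj(σ|_i) - maj(σ|_{i-1})`, where `σ|_i` erases letters `> i`. -/
def majcode (w : List ℕ) : List ℕ :=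
  (List.range w.length).map (fun i => maj (w.filter (· ≤ i+1)) - maj (w.filter (· ≤ i)))

/-- `Mc`-code: `d_i = maj(σ^{(i)}) - maj(σ^{(i+1)})`, where `σ^{(i)}` erases letters `< i`. -/
def mc (w : List ℕ) : List ℕ :=
  (List.range w.length).map (fun i => maj (w.filter (fun x => i+1 ≤ x)) - maj (w.filter (fun x => i+2 ≤ x)))

/-- One-line word of the inverse permutation. -/
def invWord (w : List ℕ) : List ℕ :=
  (List.range w.length).map (fun i => w.idxOf (i+1) + 1)

/-- `Ic σ = Lc (σ⁻¹)`. -/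
def ic (w : List ℕ) : List ℕ := lc (invWord w)

/-- Inverse ligne of route. -/
def iligne (w : List ℕ) : Finset ℕ := ligne (invWord w)

/-- Complement map `δ` on codes: `δ(d₁⋯d_n) = (0-d₁)(1-d₂)⋯(n-1-d_n)`. -/
def deltaC (w : List ℕ) : List ℕ :=
  (List.range w.length).map (fun i => i - w.getD i 0)

/-- Nondecreasing rearrangement of a word. -/
def sortW (w : List ℕ) : List ℕ := List.insertionSort (· ≤ ·) w

/-- Set-valued statistic `El = Ligne ∘ Mc⁻¹` on subdiagonal words. -/
noncomputable def El (d : List ℕ) : Finset ℕ := by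
  classical
  exact if h : ∃ w, IsPermWord d.length w ∧ mc w = d then ligne h.choose else ∅

/-- Set-valued statistic `Eul = Ligne ∘ Majcode⁻¹` on subexcedent words. -/
noncomputable def Eul (d : List ℕ) : Finset ℕ := by
  classical
  exact if h : ∃ w, IsPermWord d.length w ∧ majcode w = d then ligne h.choose else ∅

open Finset

/-- Slot `s` of a word of length `k` is the gap after its first `s` letters. If `L` is the descent
set of the word, `insertDescents L s k` is the descent set after a letter larger than all others is
inserted into slot `s`. -/
def insertDescents (L : Finset ℕ) (s k : ℕ) : Finset ℕ :=
  (L.erase s).image (fun i => if i < s then i else i + 1) ∪ (if s < k then {s + 1} else ∅)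

/-- The increase of `maj` caused by that insertion (`sum_insertDescents`). -/
def slotLabel (L : Finset ℕ) (s k : ℕ) : ℕ :=
  if s ∈ L then #{i ∈ L | s ≤ i}
  else if s < k then s + 1 + #{i ∈ L | s < i}
  else 0

section Insertion

variable {L : Finset ℕ} {s s' k : ℕ}

lemma mem_insertDescents {j : ℕ} :
    j ∈ insertDescents L s k ↔
      (j ∈ L ∧ j < s) ∨ (j - 1 ∈ L ∧ s + 1 < j) ∨ (s < k ∧ j = s + 1) := by
  simp only [insertDescents, mem_union, mem_image, mem_erase]
  constructor
  · rintro (⟨i, ⟨hne, hiL⟩, rfl⟩ | hj)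
    · split_ifs with hi
      · exact .inl ⟨hiL, hi⟩
      · exact .inr (.inl ⟨by simpa using hiL, by omega⟩)
    · split_ifs at hj with hsk
      · exact .inr (.inr ⟨hsk, mem_singleton.1 hj⟩)
      · simp at hj
  · rintro (⟨hjL, hjs⟩ | ⟨hjL, hjs⟩ | ⟨hsk, rfl⟩)
    · exact .inl ⟨j, ⟨by omega, hjL⟩, if_pos hjs⟩
    · exact .inl ⟨j - 1, ⟨by omega, hjL⟩, by rw [if_neg (by omega)]; omega⟩
    · simp [hsk]

lemma insertDescents_subset (hL : L ⊆ Icc 1 (k - 1)) : insertDescents L s k ⊆ Icc 1 k := by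
  intro j hj
  rw [mem_insertDescents] at hj
  rw [mem_Icc]
  rcases hj with ⟨hjL, -⟩ | ⟨hjL, -⟩ | ⟨hsk, rfl⟩
  · have := mem_Icc.1 (hL hjL); omega
  · have := mem_Icc.1 (hL hjL); omega
  · omega

lemma card_filter_le_of_mem (hs : s ∈ L) : #{i ∈ L | s ≤ i} = #{i ∈ L | s < i} + 1 := by
  rw [← card_insert_of_notMem (s := {i ∈ L | s < i}) (a := s) (by simp)]
  congr 1
  ext i
  simp only [mem_filter, mem_insert]
  grind

lemma sum_insertDescents (hL : L ⊆ Icc 1 (k - 1)) :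
    ∑ i ∈ insertDescents L s k, i = ∑ i ∈ L, i + slotLabel L s k := by
  have hinj : Set.InjOn (fun i => if i < s then i else i + 1) (L.erase s) := by
    intro a _ b _ h
    simp only at h
    split_ifs at h <;> omega
  have hshift : ∀ i ∈ L.erase s, (if i < s then i else i + 1) = i + if s < i then 1 else 0 := by
    intro i hi
    have := ne_of_mem_erase hi
    split_ifs <;> omega
  have hdisj : Disjoint ((L.erase s).image (fun i => if i < s then i else i + 1))
      (if s < k then {s + 1} else ∅) := by
    split_ifs
    · simp only [disjoint_singleton_right, mem_image, mem_erase, not_exists, not_and]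
      intro i hi h
      split_ifs at h <;> omega
    · exact disjoint_empty_right _
  have hcount : #{i ∈ L.erase s | s < i} = #{i ∈ L | s < i} := by
    rw [filter_erase, erase_eq_of_notMem (by simp)]
  rw [insertDescents, sum_union hdisj, sum_image hinj, sum_congr rfl hshift, sum_add_distrib,
    sum_boole, Nat.cast_id, hcount, slotLabel]
  by_cases hsL : s ∈ L
  · have hsk : s < k := by have := hL hsL; simp only [mem_Icc] at this; omega
    rw [if_pos hsL, if_pos hsk, sum_singleton, card_filter_le_of_mem hsL, ← sum_erase_add _ _ hsL]
    ring
  · rw [erase_eq_of_notMem hsL, if_neg hsL]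
    split_ifs with hsk
    · simp only [sum_singleton]; ring
    · have : #{i ∈ L | s < i} = 0 := by
        rw [card_eq_zero, filter_eq_empty_iff]
        intro i hi
        have := hL hi
        simp only [mem_Icc] at this
        omega
      simp [this]

lemma card_filter_lt_add_card_filter_lt_compl (hL : L ⊆ Icc 1 (k - 1)) (t : ℕ) :
    #{i ∈ L | t < i} + #{i ∈ Icc 1 (k - 1) \ L | t < i} = k - 1 - t := by
  have hsub : {i ∈ L | t < i} ⊆ {i ∈ Icc 1 (k - 1) | t < i} := filter_subset_filter _ hL
  have hIcc : {i ∈ Icc 1 (k - 1) | t < i} = Icc (t + 1) (k - 1) := by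
    ext i; simp only [mem_filter, mem_Icc]; omega
  have hcompl :
      {i ∈ Icc 1 (k - 1) \ L | t < i} = {i ∈ Icc 1 (k - 1) | t < i} \ {i ∈ L | t < i} := by
    ext i; simp only [mem_filter, mem_sdiff]; tauto
  rw [hcompl, card_sdiff_of_subset hsub, add_tsub_cancel_of_le (card_le_card hsub),
    hIcc, Nat.card_Icc]
  omega

lemma slotLabel_of_descent (hL : L ⊆ Icc 1 (k - 1)) (hs : s ∈ L ∨ s = k) :
    slotLabel L s k = #{i ∈ L | s ≤ i} := by
  rcases hs with hs | rfl
  · rw [slotLabel, if_pos hs]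
  · have hempty : {i ∈ L | s ≤ i} = ∅ := filter_eq_empty_iff.2 fun i hi => by
      have := mem_Icc.1 (hL hi); omega
    have hsL : s ∉ L := fun hs => by have := mem_Icc.1 (hL hs); omega
    rw [slotLabel, if_neg hsL, if_neg (lt_irrefl s), hempty, card_empty]

lemma slotLabel_le_card_of_descent (hL : L ⊆ Icc 1 (k - 1)) (hs : s ∈ L ∨ s = k) :
    slotLabel L s k ≤ #L :=
  slotLabel_of_descent hL hs ▸ card_filter_le _ _

lemma slotLabel_add_card_filter_lt_compl (hL : L ⊆ Icc 1 (k - 1)) (hsL : s ∉ L) (hsk : s < k) :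
    slotLabel L s k + #{i ∈ Icc 1 (k - 1) \ L | s < i} = k := by
  have := card_filter_lt_add_card_filter_lt_compl hL s
  rw [slotLabel, if_neg hsL, if_pos hsk]
  omega

lemma card_lt_slotLabel_of_ascent (hL : L ⊆ Icc 1 (k - 1)) (hsL : s ∉ L) (hsk : s < k) :
    #L < slotLabel L s k := by
  have hle : #{i ∈ L | ¬ s < i} ≤ s := by
    have := card_le_card (show {i ∈ L | ¬ s < i} ⊆ Icc 1 s from fun i hi => by
      rw [mem_filter] at hi; have := mem_Icc.1 (hL hi.1); rw [mem_Icc]; omega)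
    rwa [Nat.card_Icc, add_tsub_cancel_right] at this
  have := card_filter_add_card_filter_not (s := L) (fun i => s < i)
  rw [slotLabel, if_neg hsL, if_pos hsk]
  omega

lemma slotLabel_le (hL : L ⊆ Icc 1 (k - 1)) (hs : s ≤ k) : slotLabel L s k ≤ k := by
  have hcard : #L ≤ k - 1 := by simpa using card_le_card hL
  by_cases hsL : s ∈ L
  · exact (slotLabel_le_card_of_descent hL (.inl hsL)).trans (by omega)
  · rcases hs.lt_or_eq with hsk | rfl
    · have := slotLabel_add_card_filter_lt_compl hL hsL hsk; omega
    · exact (slotLabel_le_card_of_descent hL (.inr rfl)).trans (by omega)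

lemma insertDescents_eq_sdiff_of_gap (hL : L ⊆ Icc 1 (k - 1)) (hsL : s ∉ L) (hss' : s < s')
    (hs'k : s' ≤ k) (hs'L : s' ∉ L) (hgap : ∀ t, s < t → t < s' → t ∈ L) :
    insertDescents L s k = Icc 1 k \ insertDescents (Icc 1 (k - 1) \ L) s' k := by
  have hcases : ∀ i,
      (i ∈ L ∧ 1 ≤ i ∧ i ≤ k - 1 ∧ i ≠ s ∧ i ≠ s') ∨ (i ∉ L ∧ ¬(s < i ∧ i < s')) := by
    intro i
    by_cases hi : i ∈ L
    · exact .inl ⟨hi, (mem_Icc.1 (hL hi)).1, (mem_Icc.1 (hL hi)).2, ne_of_mem_of_not_mem hi hsL,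
        ne_of_mem_of_not_mem hi hs'L⟩
    · exact .inr ⟨hi, fun h => hi (hgap i h.1 h.2)⟩
  ext j
  simp only [mem_sdiff, mem_Icc, mem_insertDescents]
  rcases hcases j with ⟨h1, hj⟩ | ⟨h1, hj⟩ <;> rcases hcases (j - 1) with ⟨h2, hj'⟩ | ⟨h2, hj'⟩ <;>
    simp only [h1, h2, true_and, false_and, not_true_eq_false, not_false_eq_true, and_true,
      and_false, false_or] <;>
    omega

lemma insertDescents_eq_sdiff_of_ascent (hL : L ⊆ Icc 1 (k - 1)) (hsL : s ∉ L) (hsk : s < k)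
    (hs' : s' ≤ k) (h : slotLabel L s k + slotLabel (Icc 1 (k - 1) \ L) s' k = k) :
    insertDescents L s k = Icc 1 k \ insertDescents (Icc 1 (k - 1) \ L) s' k := by
  set L' := Icc 1 (k - 1) \ L
  have hL' : L' ⊆ Icc 1 (k - 1) := sdiff_subset
  have hlabel : slotLabel L' s' k = #{i ∈ L' | s < i} := by
    have : slotLabel L s k + #{i ∈ L' | s < i} = k := slotLabel_add_card_filter_lt_compl hL hsL hsk
    omega
  have hdesc : s' ∈ L' ∨ s' = k := by
    by_contra! hasc
    have := card_lt_slotLabel_of_ascent hL' hasc.1 (lt_of_le_of_ne hs' hasc.2)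
    have := card_filter_le L' (fun i => s < i)
    omega
  have hcard : #{i ∈ L' | s' ≤ i} = #{i ∈ L' | s < i} := slotLabel_of_descent hL' hdesc ▸ hlabel
  have hss' : s < s' := by
    by_contra! hs's
    rcases hdesc with hs'L' | rfl
    · have hssub : {i ∈ L' | s < i} ⊂ {i ∈ L' | s' ≤ i} :=
        (ssubset_iff_of_subset (monotone_filter_right _ fun i hi => by omega)).2
          ⟨s', by simp [hs'L'], by simp [hs's]⟩
      exact (card_lt_card hssub).ne' hcard
    · omega
  have hfilter : {i ∈ L' | s' ≤ i} = {i ∈ L' | s < i} :=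
    eq_of_subset_of_card_le (monotone_filter_right _ fun i hi => by omega) hcard.ge
  refine insertDescents_eq_sdiff_of_gap hL hsL hss' hs' ?_ fun t hst hts' => ?_
  · rcases hdesc with hs'L' | rfl
    · exact (mem_sdiff.1 hs'L').2
    · exact fun hkL => by have := mem_Icc.1 (hL hkL); omega
  · by_contra htL
    have ht : t ∈ {i ∈ L' | s < i} :=
      mem_filter.2 ⟨mem_sdiff.2 ⟨mem_Icc.2 ⟨by omega, by omega⟩, htL⟩, hst⟩
    rw [← hfilter, mem_filter] at ht
    omega

lemma insertDescents_compl (hL : L ⊆ Icc 1 (k - 1)) (hs : s ≤ k) (hs' : s' ≤ k)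
    (h : slotLabel L s k + slotLabel (Icc 1 (k - 1) \ L) s' k = k) :
    insertDescents L s k = Icc 1 k \ insertDescents (Icc 1 (k - 1) \ L) s' k := by
  set L' := Icc 1 (k - 1) \ L
  have hL' : L' ⊆ Icc 1 (k - 1) := sdiff_subset
  have hLL' : Icc 1 (k - 1) \ L' = L := Finset.sdiff_sdiff_eq_self hL
  by_cases hdesc : s ∈ L ∨ s = k
  · by_cases hdesc' : s' ∈ L' ∨ s' = k
    · have hk : k = 0 := by
        have := slotLabel_le_card_of_descent hL hdesc
        have := slotLabel_le_card_of_descent hL' hdesc'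
        have : #L' + #L = k - 1 := by simpa using card_sdiff_add_card_eq_card hL
        omega
      subst hk
      have hempty : Icc 1 0 = ∅ := rfl
      rw [hempty, empty_sdiff, ← subset_empty, ← hempty]
      exact insertDescents_subset hL
    · rw [not_or] at hdesc'
      have := insertDescents_eq_sdiff_of_ascent hL' hdesc'.1 (lt_of_le_of_ne hs' hdesc'.2) hs
        (by rwa [hLL', add_comm])
      rw [hLL'] at this
      rw [this, Finset.sdiff_sdiff_eq_self (insertDescents_subset hL)]
  · rw [not_or] at hdesc
    exact insertDescents_eq_sdiff_of_ascent hL hdesc.1 (lt_of_le_of_ne hs hdesc.2) hs' h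

end Insertion

lemma mem_ligne {w : List ℕ} {j : ℕ} :
    j ∈ ligne w ↔ 1 ≤ j ∧ j < w.length ∧ w.getD j 0 < w.getD (j - 1) 0 := by
  simp only [ligne, mem_filter, mem_Icc]
  omega

lemma getD_append_cons {α : Type*} (A B : List α) (M : α) (i : ℕ) (d : α) :
    (A ++ M :: B).getD i d =
      if i < A.length then (A ++ B).getD i d
      else if i = A.length then M else (A ++ B).getD (i - 1) d := by
  split_ifs with hlt heq
  · rw [List.getD_append _ _ _ _ hlt, List.getD_append _ _ _ _ hlt]
  · subst heq; simp
  · rw [List.getD_append_right _ _ _ _ (by omega), List.getD_append_right _ _ _ _ (by omega)]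
    obtain ⟨m, hm⟩ : ∃ m, i - A.length = m + 1 := ⟨i - A.length - 1, by omega⟩
    rw [hm, show i - 1 - A.length = m by omega]
    rfl

lemma ligne_subset (w : List ℕ) : ligne w ⊆ Icc 1 (w.length - 1) := filter_subset _ _

lemma ligne_append_cons {A B : List ℕ} {M : ℕ} (hM : ∀ x ∈ A ++ B, x < M) :
    ligne (A ++ M :: B) = insertDescents (ligne (A ++ B)) A.length (A ++ B).length := by
  have hlt : ∀ t, t < (A ++ B).length → (A ++ B).getD t 0 < M := fun t ht => by
    rw [List.getD_eq_getElem _ _ ht]; exact hM _ (List.getElem_mem ht)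
  have hlen : (A ++ M :: B).length = (A ++ B).length + 1 := by simp; omega
  have hA : A.length ≤ (A ++ B).length := by simp
  ext j
  have := hlt (j - 1)
  simp only [mem_insertDescents, mem_ligne, hlen, getD_append_cons, show j - 1 - 1 = j - 2 by omega]
  split_ifs <;> omega

lemma maj_append_cons {A B : List ℕ} {M : ℕ} (hM : ∀ x ∈ A ++ B, x < M) :
    maj (A ++ M :: B) = maj (A ++ B) + slotLabel (ligne (A ++ B)) A.length (A ++ B).length := by
  rw [maj, maj, ligne_append_cons hM]
  exact sum_insertDescents (ligne_subset _)

namespace IsPermWord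

variable {n : ℕ} {w : List ℕ}

lemma length_eq (h : IsPermWord n w) : w.length = n := by
  simpa using List.Perm.length_eq h

lemma lt_of_mem (h : IsPermWord n w) {x : ℕ} (hx : x ∈ w) : x < n + 1 := by
  have := List.mem_range'_1.1 (List.Perm.subset h hx)
  omega

lemma exists_append_cons (h : IsPermWord (n + 1) w) :
    ∃ A B, w = A ++ (n + 1) :: B ∧ IsPermWord n (A ++ B) := by
  obtain ⟨A, B, rfl⟩ := List.append_of_mem (List.Perm.subset (List.Perm.symm h)
    (List.mem_range'_1.2 ⟨by omega, by omega⟩ : n + 1 ∈ List.range' 1 (n + 1)))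
  have hrange : (List.range' 1 (n + 1)).Perm ((n + 1) :: List.range' 1 n) := by
    rw [List.range'_1_concat, Nat.add_comm 1 n]
    exact List.perm_append_singleton _ _
  exact ⟨A, B, rfl, (List.perm_cons _).1 (List.perm_middle.symm.trans (List.Perm.trans h hrange))⟩

end IsPermWord

lemma majcode_length (w : List ℕ) : (majcode w).length = w.length := by
  simp [majcode]

lemma majcode_append_cons {n : ℕ} {A B : List ℕ} (h : IsPermWord n (A ++ B)) :
    majcode (A ++ (n + 1) :: B) =
      majcode (A ++ B) ++ [slotLabel (ligne (A ++ B)) A.length n] := by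
  have hlt : ∀ x ∈ A ++ B, x < n + 1 := fun x hx => h.lt_of_mem hx
  have hle : ∀ x ∈ A ++ (n + 1) :: B, x ≤ n + 1 := fun x hx => by
    rcases List.mem_cons.1 (List.perm_middle.subset hx) with rfl | hx
    exacts [le_rfl, (hlt x hx).le]
  have hfilter : ∀ m < n + 1, (A ++ (n + 1) :: B).filter (· ≤ m) = (A ++ B).filter (· ≤ m) := by
    intro m hm
    simp [List.filter_append, Nat.not_le.2 hm]
  have hlen : (A ++ (n + 1) :: B).length = n + 1 := by
    simp only [List.length_append, List.length_cons, ← h.length_eq]; omega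
  unfold majcode
  rw [hlen, h.length_eq, List.range_succ, List.map_append, List.map_singleton]
  congr 1
  · refine List.map_congr_left fun i hi => ?_
    rw [List.mem_range] at hi
    rw [hfilter _ (by omega), hfilter _ (by omega)]
  · rw [List.filter_eq_self.2 (by simpa using hle), hfilter n n.lt_succ_self,
      List.filter_eq_self.2 (by simpa [Nat.lt_succ_iff] using hlt), maj_append_cons hlt,
      h.length_eq, Nat.add_sub_cancel_left]

lemma deltaC_append_singleton (x : List ℕ) (y : ℕ) :
    deltaC (x ++ [y]) = deltaC x ++ [x.length - y] := by
  unfold deltaC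
  rw [List.length_append, List.length_singleton, List.range_succ, List.map_append]
  congr 1
  · exact List.map_congr_left fun i hi => by rw [List.getD_append _ _ _ _ (List.mem_range.1 hi)]
  · simp

theorem stmt6 (n : ℕ) (σ τ : List ℕ) (hσ : IsPermWord n σ) (hτ : IsPermWord n τ)
    (h : majcode σ = deltaC (majcode τ)) :
    ligne σ = Finset.Icc 1 (n - 1) \ ligne τ := by
  induction n generalizing σ τ with
  | zero => simp [ligne, hσ.length_eq]
  | succ n ih =>
    obtain ⟨A, B, rfl, hAB⟩ := hσ.exists_append_cons
    obtain ⟨C, D, rfl, hCD⟩ := hτ.exists_append_cons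
    rw [majcode_append_cons hAB, majcode_append_cons hCD, deltaC_append_singleton] at h
    obtain ⟨hcode, hlast⟩ := List.append_inj' h rfl
    have hligne := ih _ _ hAB hCD hcode
    have hsub : ligne (C ++ D) ⊆ Icc 1 (n - 1) := hCD.length_eq ▸ ligne_subset (C ++ D)
    have hC : C.length ≤ n := by simp [← hCD.length_eq]
    have hA : A.length ≤ n := by simp [← hAB.length_eq]
    have hlabel : slotLabel (ligne (C ++ D)) C.length n +
        slotLabel (Icc 1 (n - 1) \ ligne (C ++ D)) A.length n = n := by
      have := slotLabel_le hsub hC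
      rw [← hligne]
      simp only [List.cons.injEq, and_true, majcode_length, hCD.length_eq] at hlast
      omega
    rw [ligne_append_cons fun x hx => hAB.lt_of_mem hx,
      ligne_append_cons fun x hx => hCD.lt_of_mem hx, hligne, hAB.length_eq, hCD.length_eq,
      Nat.add_sub_cancel, insertDescents_compl hsub hC hA hlabel,
      Finset.sdiff_sdiff_eq_self (insertDescents_subset sdiff_subset)]
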